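/- arXiv:1408.2932 — 2 statements merged into one kernel-verified Lean document; each statement's English description precedes it below -/
import Mathlib

section
/- Let H₁, H₂ : ℝ² → ℝ be compactly supported Lipschitz functions such that H₁ is monotone, i.e. the level set H₁^{-1}(h) is connected for every h ∈ ℝ, and such that the measures |∇H₁|·L² and |∇H₂|·L² are mutually singular (where ∇H_i denotes the a.e.-defined gradient and L² is Lebesgue measure on ℝ²). Then for Lebesgue-a.e. h ∈ ℝ, the function H₂ is constant on the level set H₁^{-1}(h). -/
open MeasureTheory Set Module
open scoped NNReal

/-!
Where `∇H₁` or `∇H₂` vanishes, the derivative of `F = (H₁, H₂) : ℝ² → ℝ²` is singular, and by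
mutual singularity of the two measures this happens almost everywhere. Since `F` is Lipschitz,
it is differentiable a.e. (Rademacher) and maps null sets to null sets, so Sard's lemma shows
that `range F` is Lebesgue-null. By Fubini, for a.e. `h` the vertical slice of `range F` over `h`
is null; it contains `H₂ '' H₁⁻¹(h)`, a connected subset of `ℝ`, which is therefore a point.
-/

theorem norm_gradient_eq_norm_fderiv {E : Type*} [NormedAddCommGroup E] [InnerProductSpace ℝ E]
    [CompleteSpace E] (f : E → ℝ) (x : E) : ‖gradient f x‖ = ‖fderiv ℝ f x‖ :=
  (InnerProductSpace.toDual ℝ E).symm.norm_map _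

theorem LinearMap.not_injective_of_finrank_lt {R M N : Type*} [Ring R] [StrongRankCondition R]
    [AddCommGroup M] [Module R M] [AddCommGroup N] [Module R N] [Module.Finite R N]
    (f : M →ₗ[R] N) (h : finrank R N < finrank R M) : ¬ Function.Injective f :=
  fun hf => (f.finrank_le_finrank_of_injective hf).not_gt h

theorem ContinuousLinearMap.not_injective_prod_of_eq_zero_or_eq_zero {E : Type*}
    [NormedAddCommGroup E] [NormedSpace ℝ E] (hE : 1 < finrank ℝ E) {f g : E →L[ℝ] ℝ}
    (h : f = 0 ∨ g = 0) : ¬ Function.Injective (f.prod g) := by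
  have not_inj (φ : E →L[ℝ] ℝ) : ¬ Function.Injective φ :=
    (φ : E →ₗ[ℝ] ℝ).not_injective_of_finrank_lt (by rwa [finrank_self])
  intro hfg
  rcases h with rfl | rfl
  · exact not_inj g fun a b hab => hfg (by simp [hab])
  · exact not_inj f fun a b hab => hfg (by simp [hab])

section Singular

variable {E F G : Type*} [NormedAddCommGroup E] [NormedSpace ℝ E] [MeasurableSpace E]
  [OpensMeasurableSpace E] [NormedAddCommGroup F] [NormedSpace ℝ F] [CompleteSpace F]
  [NormedAddCommGroup G] [NormedSpace ℝ G] [CompleteSpace G] {μ : Measure E}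

theorem ae_fderiv_eq_zero_of_withDensity_eq_zero {f : E → F} {v : Set E} (hv : MeasurableSet v)
    (h : μ.withDensity (fun x => ENNReal.ofReal ‖fderiv ℝ f x‖) v = 0) :
    ∀ᵐ x ∂μ, x ∈ v → fderiv ℝ f x = 0 := by
  rw [withDensity_apply _ hv,
    setLIntegral_eq_zero_iff hv (measurable_fderiv ℝ f).norm.ennreal_ofReal] at h
  filter_upwards [h] with x hx hxv
  simpa only [ENNReal.ofReal_eq_zero, norm_le_zero_iff] using hx hxv

theorem MeasureTheory.Measure.MutuallySingular.ae_fderiv_eq_zero_or_fderiv_eq_zero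
    {f : E → F} {g : E → G}
    (h : μ.withDensity (fun x => ENNReal.ofReal ‖fderiv ℝ f x‖) ⟂ₘ
      μ.withDensity (fun x => ENNReal.ofReal ‖fderiv ℝ g x‖)) :
    ∀ᵐ x ∂μ, fderiv ℝ f x = 0 ∨ fderiv ℝ g x = 0 := by
  obtain ⟨u, hu, hfu, hgu⟩ := h
  filter_upwards [ae_fderiv_eq_zero_of_withDensity_eq_zero hu hfu,
    ae_fderiv_eq_zero_of_withDensity_eq_zero hu.compl hgu] with x hf hg
  by_cases hx : x ∈ u
  exacts [Or.inl (hf hx), Or.inr (hg hx)]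

end Singular

section Lipschitz

variable {E F : Type*} [NormedAddCommGroup E] [NormedSpace ℝ E] [FiniteDimensional ℝ E]
  [MeasurableSpace E] [BorelSpace E] [NormedAddCommGroup F] [NormedSpace ℝ F]
  [FiniteDimensional ℝ F] [MeasurableSpace F] [BorelSpace F]
  (μ : Measure E) [μ.IsAddHaarMeasure] (ν : Measure F) [ν.IsAddHaarMeasure]
  {K : ℝ≥0} {f : E → F}

theorem LipschitzWith.addHaar_image_eq_zero (hf : LipschitzWith K f)
    (hEF : finrank ℝ E = finrank ℝ F) {s : Set E} (hs : μ s = 0) : ν (f '' s) = 0 := by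
  have hH : μH[finrank ℝ E] s = 0 := Measure.absolutelyContinuous_isAddHaarMeasure _ μ hs
  refine Measure.absolutelyContinuous_isAddHaarMeasure ν μH[finrank ℝ F] ?_
  rw [← hEF]
  refine le_antisymm ?_ bot_le
  simpa [hH] using hf.hausdorffMeasure_image_le (Nat.cast_nonneg (finrank ℝ E)) s

theorem LipschitzWith.addHaar_range_eq_zero_of_ae_not_injective (hf : LipschitzWith K f)
    (hEF : finrank ℝ E = finrank ℝ F) (hf' : ∀ᵐ x ∂μ, ¬ Function.Injective (fderiv ℝ f x)) :
    ν (range f) = 0 := by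
  set s := {x | DifferentiableAt ℝ f x ∧ ¬ Function.Injective (fderiv ℝ f x)}
  have hs : μ sᶜ = 0 := ae_iff.mp <| by
    filter_upwards [hf.ae_differentiableAt, hf'] with x h1 h2 using ⟨h1, h2⟩
  -- Mathlib's Sard lemma is stated for self-maps `E → E`, so compose `f` with `F ≃ E`.
  let e : F ≃L[ℝ] E := .ofFinrankEq hEF.symm
  have hes : μ ((e ∘ f) '' s) = 0 := by
    refine addHaar_image_eq_zero_of_det_fderivWithin_eq_zero μ
      (f' := fun x => (e : F →L[ℝ] E).comp (fderiv ℝ f x))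
      (fun x hx => (e.hasFDerivAt.comp x hx.1.hasFDerivAt).hasFDerivWithinAt) fun x hx => ?_
    refine LinearMap.det_eq_zero_iff_ker_ne_bot.mpr fun hker => hx.2 fun a b hab => ?_
    exact LinearMap.ker_eq_bot.mp hker (by simp [hab])
  have hfs : ν (f '' s) = 0 := by
    simpa [image_comp, ← image_comp e.symm] using
      e.symm.lipschitz.addHaar_image_eq_zero μ ν hEF hes
  rw [← image_univ, ← union_compl_self s, image_union]
  exact measure_union_null hfs (hf.addHaar_image_eq_zero μ ν hEF hs)

end Lipschitz

theorem IsPreconnected.subsingleton_of_volume_eq_zero {s : Set ℝ} (hs : IsPreconnected s)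
    (h0 : volume s = 0) : s.Subsingleton := by
  intro x hx y hy
  by_contra hne
  wlog hxy : x < y generalizing x y
  · exact this hy hx (Ne.symm hne) (lt_of_le_of_ne (not_lt.mp hxy) (Ne.symm hne))
  have hIcc := measure_mono_null (hs.ordConnected.out hx hy) h0
  rw [Real.volume_Icc, ENNReal.ofReal_eq_zero] at hIcc
  linarith

theorem constant_on_level_sets_of_monotone_general
    (H₁ H₂ : EuclideanSpace ℝ (Fin 2) → ℝ) (K₁ K₂ : ℝ≥0)
    (h₁lip : LipschitzWith K₁ H₁) (h₂lip : LipschitzWith K₂ H₂)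
    (h₁mono : ∀ h : ℝ, IsPreconnected (H₁ ⁻¹' {h}))
    (hsing : (volume.withDensity fun x => ENNReal.ofReal ‖gradient H₁ x‖) ⟂ₘ
      (volume.withDensity fun x => ENNReal.ofReal ‖gradient H₂ x‖)) :
    ∀ᵐ h ∂(volume : Measure ℝ),
      ∀ x ∈ H₁ ⁻¹' {h}, ∀ y ∈ H₁ ⁻¹' {h}, H₂ x = H₂ y := by
  simp only [norm_gradient_eq_norm_fderiv] at hsing
  have hrange : volume (range fun x => (H₁ x, H₂ x)) = 0 := by
    refine (h₁lip.prodMk h₂lip).addHaar_range_eq_zero_of_ae_not_injective volume volume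
      (by simp) ?_
    filter_upwards [h₁lip.ae_differentiableAt, h₂lip.ae_differentiableAt,
      hsing.ae_fderiv_eq_zero_or_fderiv_eq_zero] with x h₁ h₂ hzero
    rw [h₁.fderiv_prodMk h₂]
    exact ContinuousLinearMap.not_injective_prod_of_eq_zero_or_eq_zero (by simp) hzero
  rw [Measure.volume_eq_prod] at hrange
  filter_upwards [Measure.measure_ae_null_of_prod_null hrange] with h hslice x hx y hy
  have hsub : H₂ '' (H₁ ⁻¹' {h}) ⊆ Prod.mk h ⁻¹' range fun x => (H₁ x, H₂ x) := by
    rintro _ ⟨z, rfl, rfl⟩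
    exact ⟨z, rfl⟩
  exact ((h₁mono h).image H₂ h₂lip.continuous.continuousOn).subsingleton_of_volume_eq_zero
    (measure_mono_null hsub hslice) (mem_image_of_mem H₂ hx) (mem_image_of_mem H₂ hy)

/-- **Constancy on level sets of a monotone Lipschitz function.**
Let `H₁, H₂ : ℝ² → ℝ` be compactly supported Lipschitz functions, `H₁` monotone (all of
its level sets are connected), and suppose the measures `|∇H₁|·L²` and `|∇H₂|·L²` are
mutually singular.  Then for a.e. `h ∈ ℝ` the function `H₂` is constant on `H₁⁻¹(h)`. -/
theorem constant_on_level_sets_of_monotone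
    (H₁ H₂ : EuclideanSpace ℝ (Fin 2) → ℝ) (K₁ K₂ : ℝ≥0)
    (h₁lip : LipschitzWith K₁ H₁) (h₂lip : LipschitzWith K₂ H₂)
    (h₁supp : HasCompactSupport H₁) (h₂supp : HasCompactSupport H₂)
    (h₁mono : ∀ h : ℝ, IsPreconnected (H₁ ⁻¹' {h}))
    (hsing : (volume.withDensity fun x => ENNReal.ofReal ‖gradient H₁ x‖) ⟂ₘ
      (volume.withDensity fun x => ENNReal.ofReal ‖gradient H₂ x‖)) :
    ∀ᵐ h ∂(volume : Measure ℝ),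
      ∀ x ∈ H₁ ⁻¹' {h}, ∀ y ∈ H₁ ⁻¹' {h}, H₂ x = H₂ y :=
  constant_on_level_sets_of_monotone_general H₁ H₂ K₁ K₂ h₁lip h₂lip h₁mono hsing
end

section
/- Let Ω ⊂ ℝ² be an open set and let H : Ω → ℝ be a Lipschitz function with bounded support. Then for Lebesgue-a.e. h ∈ H(Ω) the level set E_h := H^{-1}(h) satisfies: (1) H¹(E_h) < ∞ and E_h is 1-rectifiable, i.e. there exist countably many Lipschitz maps f_i : ℝ → ℝ² such that H¹( E_h \ ⋃_i f_i(ℝ) ) = 0; (2) for H¹-a.e. x ∈ E_h, the function H is differentiable at x and ∇H(x) ≠ 0. -/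
open MeasureTheory Set Filter
open scoped Topology ENNReal NNReal

noncomputable section

/-!
Extend `H` to a Lipschitz function on the whole plane. Covering by dyadic squares gives an
Eilenberg-type inequality: if `f` is `L`-Lipschitz at scale `r` on `S`, then
`∫⁻ h, μH[1] (S ∩ f ⁻¹' {h}) ≤ 2 L |thickening r S|` (through a measurable majorant).
On the bounded support, which contains the level sets with `h ≠ 0`, this makes almost every
level set of finite length. Exhausting a Lebesgue-null set (such as the non-differentiability
set, by Rademacher) by open sets, and the critical points by the sets where `f` is
`2⁻ʲ`-Lipschitz at small scales, shows that both meet almost every level set in an `H¹`-null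
set. Near a point with nonzero gradient the level set lies in a narrow cone around the tangent
line, so countably many pieces of it are Lipschitz graphs over a line.
-/

section DyadicCube

variable {ι : Type*}

def dyadicCube (n : ℕ) (q : ι → ℤ) : Set (EuclideanSpace ℝ ι) :=
  {x | ∀ i, ⌊2 ^ n * x i⌋ = q i}

theorem mem_dyadicCube_floor (n : ℕ) (x : EuclideanSpace ℝ ι) :
    x ∈ dyadicCube n (fun i ↦ ⌊2 ^ n * x i⌋) :=
  fun _ ↦ rfl

theorem pairwise_disjoint_dyadicCube (n : ℕ) :
    Pairwise fun q q' : ι → ℤ ↦ Disjoint (dyadicCube n q) (dyadicCube n q') := fun _ _ hqq' ↦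
  disjoint_left.2 fun _ hx hx' ↦ hqq' (funext fun i ↦ (hx i).symm.trans (hx' i))

theorem mem_dyadicCube_iff {n : ℕ} {q : ι → ℤ} {x : EuclideanSpace ℝ ι} :
    x ∈ dyadicCube n q ↔ ∀ i, x i ∈ Ico (q i / 2 ^ n : ℝ) ((q i + 1) / 2 ^ n) := by
  have h2 : (0 : ℝ) < 2 ^ n := by positivity
  simp only [dyadicCube, mem_ofPred_eq, mem_Ico, div_le_iff₀' h2, lt_div_iff₀' h2, Int.floor_eq_iff]

theorem dyadicCube_eq_preimage [Fintype ι] (n : ℕ) (q : ι → ℤ) :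
    dyadicCube n q = (MeasurableEquiv.toLp 2 (ι → ℝ)).symm ⁻¹'
      univ.pi fun i ↦ Ico (q i / 2 ^ n : ℝ) ((q i + 1) / 2 ^ n) := by
  ext x
  simp only [mem_dyadicCube_iff, mem_preimage, mem_univ_pi]
  rfl

theorem measurableSet_dyadicCube [Fintype ι] (n : ℕ) (q : ι → ℤ) :
    MeasurableSet (dyadicCube n q) := by
  rw [dyadicCube_eq_preimage]
  exact (MeasurableEquiv.measurable _) (MeasurableSet.univ_pi fun _ ↦ measurableSet_Ico)

theorem volume_dyadicCube [Fintype ι] (n : ℕ) (q : ι → ℤ) :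
    volume (dyadicCube n q) = ENNReal.ofReal ((2 ^ n)⁻¹ ^ Fintype.card ι) := by
  have hlen : ∀ a : ℝ, (a + 1) / 2 ^ n - a / 2 ^ n = (2 ^ n)⁻¹ := fun a ↦ by field_simp; ring
  rw [dyadicCube_eq_preimage,
    (EuclideanSpace.volume_preserving_symm_measurableEquiv_toLp ι).measure_preimage
      (MeasurableSet.univ_pi fun _ ↦ measurableSet_Ico).nullMeasurableSet, volume_pi_pi]
  simp only [Real.volume_Ico, hlen, Finset.prod_const, Finset.card_univ]
  rw [ENNReal.ofReal_pow (by positivity)]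

theorem dist_le_of_mem_dyadicCube [Fintype ι] {n : ℕ} {q : ι → ℤ} {x y : EuclideanSpace ℝ ι}
    (hx : x ∈ dyadicCube n q) (hy : y ∈ dyadicCube n q) :
    dist x y ≤ √(Fintype.card ι) / 2 ^ n := by
  rw [mem_dyadicCube_iff] at hx hy
  have hcoord : ∀ i, dist (x i) (y i) ^ 2 ≤ ((2 ^ n)⁻¹ : ℝ) ^ 2 := fun i ↦ by
    obtain ⟨hx₁, hx₂⟩ := hx i
    obtain ⟨hy₁, hy₂⟩ := hy i
    have hlen : ((q i : ℝ) + 1) / 2 ^ n - q i / 2 ^ n = (2 ^ n)⁻¹ := by field_simp; ring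
    rw [Real.dist_eq, sq_abs]
    exact sq_le_sq' (by linarith) (by linarith)
  calc dist x y = √(∑ i, dist (x i) (y i) ^ 2) := EuclideanSpace.dist_eq x y
    _ ≤ √(∑ _i : ι, ((2 ^ n)⁻¹ : ℝ) ^ 2) := Real.sqrt_le_sqrt (Finset.sum_le_sum fun i _ ↦ hcoord i)
    _ = √(Fintype.card ι) / 2 ^ n := by
      rw [Finset.sum_const, Finset.card_univ, nsmul_eq_mul, Real.sqrt_mul (Nat.cast_nonneg _),
        Real.sqrt_sq (by positivity), div_eq_mul_inv]

theorem ediam_dyadicCube_le [Fintype ι] (n : ℕ) (q : ι → ℤ) :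
    Metric.ediam (dyadicCube n q) ≤ ENNReal.ofReal (√(Fintype.card ι) / 2 ^ n) :=
  Metric.ediam_le_of_forall_dist_le fun _ hx _ hy ↦ dist_le_of_mem_dyadicCube hx hy

theorem tsum_volume_dyadicCube_inter [Fintype ι] (n : ℕ) {U : Set (EuclideanSpace ℝ ι)}
    (hU : MeasurableSet U) :
    ∑' q, volume (dyadicCube n q ∩ U) = volume U := by
  rw [← measure_iUnion (fun q q' hqq' ↦ (pairwise_disjoint_dyadicCube n hqq').mono inter_subset_left
      inter_subset_left) fun q ↦ (measurableSet_dyadicCube n q).inter hU, ← iUnion_inter]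
  congr
  exact inter_eq_right.2 fun x _ ↦ mem_iUnion.2 ⟨_, mem_dyadicCube_floor n x⟩

end DyadicCube

section LevelSetBound

variable {X : Type*} [EMetricSpace X] [MeasurableSpace X] [BorelSpace X]

/-- The level-set measures `h ↦ μH[1] (S ∩ f ⁻¹' {h})` need not be measurable, so their integral
is controlled through a measurable majorant. -/
def HasLevelSetBound (f : X → ℝ) (S : Set X) (c : ℝ≥0∞) : Prop :=
  ∃ φ : ℝ → ℝ≥0∞, Measurable φ ∧ (∀ h, μH[1] (S ∩ f ⁻¹' {h}) ≤ φ h) ∧ ∫⁻ h, φ h ≤ c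

namespace HasLevelSetBound

variable {f : X → ℝ} {S T : Set X} {c c' : ℝ≥0∞}

theorem mono (hS : HasLevelSetBound f S c) (hTS : T ⊆ S) (hc : c ≤ c') :
    HasLevelSetBound f T c' := by
  obtain ⟨φ, hφ, hle, hint⟩ := hS
  exact ⟨φ, hφ, fun h ↦ (measure_mono (inter_subset_inter_left _ hTS)).trans (hle h), hint.trans hc⟩

theorem iUnion_of_monotone {S : ℕ → Set X} (hS : Monotone S)
    (hc : ∀ m, HasLevelSetBound f (S m) c) : HasLevelSetBound f (⋃ m, S m) c := by
  choose φ hφ hle hint using hc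
  refine ⟨fun h ↦ liminf (fun m ↦ φ m h) atTop, .liminf hφ, fun h ↦ ?_, ?_⟩
  · have hmono : Monotone fun m ↦ S m ∩ f ⁻¹' {h} := fun m m' hm ↦ inter_subset_inter_left _ (hS hm)
    calc μH[1] ((⋃ m, S m) ∩ f ⁻¹' {h}) = ⨆ m, μH[1] (S m ∩ f ⁻¹' {h}) := by
          rw [iUnion_inter, hmono.measure_iUnion]
      _ ≤ liminf (fun m ↦ φ m h) atTop := iSup_le fun m ↦ le_liminf_of_le (by isBoundedDefault) <|
          eventually_atTop.2 ⟨m, fun m' hm' ↦ (measure_mono (hmono hm')).trans (hle m' h)⟩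
  · calc ∫⁻ h, liminf (fun m ↦ φ m h) atTop ≤ liminf (fun m ↦ ∫⁻ h, φ m h) atTop :=
          lintegral_liminf_le hφ
      _ ≤ c := liminf_le_of_frequently_le' (Frequently.of_forall hint)

theorem ae_ne_top (hS : HasLevelSetBound f S c) (hc : c ≠ ∞) :
    ∀ᵐ h, μH[1] (S ∩ f ⁻¹' {h}) ≠ ∞ := by
  obtain ⟨φ, hφ, hle, hint⟩ := hS
  filter_upwards [ae_lt_top hφ (ne_top_of_le_ne_top hc hint)] with h hh
  exact ((hle h).trans_lt hh).ne

theorem ae_eq_zero {ε : ℕ → ℝ≥0∞} (hε : Tendsto ε atTop (𝓝 0))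
    (hS : ∀ n, HasLevelSetBound f S (ε n)) : ∀ᵐ h, μH[1] (S ∩ f ⁻¹' {h}) = 0 := by
  choose φ hφ hle hint using hS
  have hinf : ∫⁻ h, ⨅ n, φ n h = 0 := nonpos_iff_eq_zero.1 <|
    ge_of_tendsto' hε fun n ↦ (lintegral_mono fun h ↦ iInf_le _ n).trans (hint n)
  filter_upwards [(lintegral_eq_zero_iff (.iInf hφ)).1 hinf] with h hh
  exact nonpos_iff_eq_zero.1 ((le_iInf fun n ↦ hle n h).trans hh.le)

end HasLevelSetBound

end LevelSetBound

theorem HasLevelSetBound.of_forall_dist_le {X : Type*} [MetricSpace X] [MeasurableSpace X]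
    [BorelSpace X] {f : X → ℝ} {T : Set X} {c : ℝ≥0∞} {P : X → X → Prop}
    (hT : ∀ x ∈ T, ∀ᶠ y in 𝓝 x, P x y)
    (hc : ∀ r ∈ Ioc (0 : ℝ) 1, HasLevelSetBound f {x ∈ T | ∀ y, dist y x ≤ r → P x y} c) :
    HasLevelSetBound f T c := by
  set S : ℕ → Set X := fun m ↦ {x ∈ T | ∀ y, dist y x ≤ 1 / (m + 1) → P x y}
  have hS : Monotone S := fun m m' hm x hx ↦
    ⟨hx.1, fun y hy ↦ hx.2 y (hy.trans (Nat.one_div_le_one_div hm))⟩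
  have hTS : T ⊆ ⋃ m, S m := fun x hx ↦ by
    obtain ⟨ε, hε, hball⟩ := Metric.eventually_nhds_iff.1 (hT x hx)
    obtain ⟨m, hm⟩ := exists_nat_one_div_lt hε
    exact mem_iUnion.2 ⟨m, hx, fun y hy ↦ hball (hy.trans_lt hm)⟩
  refine (iUnion_of_monotone hS fun m ↦ hc _ ⟨by positivity, ?_⟩).mono hTS le_rfl
  exact div_le_one_of_le₀ (by linarith [m.cast_nonneg (α := ℝ)]) (by positivity)

section Eilenberg

open Metric

/-- Bounds the `H¹`-premeasure of `S ∩ f ⁻¹' {h}` at scale `√2 / 2 ^ n`, the diameter of a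
dyadic square; the closure makes it measurable in `h`. -/
def dyadicLevelSum (f : EuclideanSpace ℝ (Fin 2) → ℝ) (S : Set (EuclideanSpace ℝ (Fin 2)))
    (n : ℕ) (h : ℝ) : ℝ≥0∞ :=
  ∑' q, (closure (f '' (dyadicCube n q ∩ S))).indicator (fun _ ↦ ENNReal.ofReal (√2 / 2 ^ n)) h

theorem measurable_dyadicLevelSum (f : EuclideanSpace ℝ (Fin 2) → ℝ)
    (S : Set (EuclideanSpace ℝ (Fin 2))) (n : ℕ) : Measurable (dyadicLevelSum f S n) :=
  .tsum fun _ ↦ measurable_const.indicator isClosed_closure.measurableSet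

variable {f : EuclideanSpace ℝ (Fin 2) → ℝ} {S : Set (EuclideanSpace ℝ (Fin 2))}

theorem tendsto_sqrt_two_div_two_pow : Tendsto (fun n : ℕ ↦ √2 / 2 ^ n) atTop (𝓝 0) :=
  tendsto_const_nhds.div_atTop (tendsto_pow_atTop_atTop_of_one_lt one_lt_two)

theorem hausdorffMeasure_inter_preimage_le_liminf_dyadicLevelSum (h : ℝ) :
    μH[1] (S ∩ f ⁻¹' {h}) ≤ liminf (fun n ↦ dyadicLevelSum f S n h) atTop := by
  have hdiam (n : ℕ) (q : Fin 2 → ℤ) : ediam (dyadicCube n q) ≤ ENNReal.ofReal (√2 / 2 ^ n) := by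
    simpa using ediam_dyadicCube_le n q
  refine (Measure.hausdorffMeasure_le_liminf_tsum 1 _ _
    (by simpa using ENNReal.tendsto_ofReal tendsto_sqrt_two_div_two_pow)
    (fun n q ↦ dyadicCube n q ∩ (S ∩ f ⁻¹' {h}))
    (.of_forall fun n q ↦ (ediam_mono inter_subset_left).trans (hdiam n q))
    (.of_forall fun n x hx ↦ mem_iUnion.2 ⟨_, mem_dyadicCube_floor n x, hx⟩)).trans
    (liminf_le_liminf (.of_forall fun n ↦ ENNReal.tsum_le_tsum fun q ↦ ?_))
  rcases (dyadicCube n q ∩ (S ∩ f ⁻¹' {h})).eq_empty_or_nonempty with he | ⟨x, hxQ, hxS, hx⟩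
  · simp [he]
  · have hh : h ∈ f '' (dyadicCube n q ∩ S) := ⟨x, ⟨hxQ, hxS⟩, hx⟩
    rw [ENNReal.rpow_one, indicator_of_mem (subset_closure hh)]
    exact (ediam_mono inter_subset_left).trans (hdiam n q)

variable {L : ℝ≥0} {r : ℝ}

theorem ofReal_mul_volume_closure_image_le {n : ℕ} (hn : √2 / 2 ^ n < r) (q : Fin 2 → ℤ)
    (hf : ∀ x ∈ S, ∀ y ∈ S, dist y x ≤ r → |f y - f x| ≤ L * dist y x) :
    ENNReal.ofReal (√2 / 2 ^ n) * volume (closure (f '' (dyadicCube n q ∩ S))) ≤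
      2 * L * volume (dyadicCube n q ∩ thickening r S) := by
  have hdist {x y} (hx : x ∈ dyadicCube n q) (hy : y ∈ dyadicCube n q) : dist x y ≤ √2 / 2 ^ n := by
    simpa using dist_le_of_mem_dyadicCube hx hy
  rcases (dyadicCube n q ∩ S).eq_empty_or_nonempty with he | ⟨z, hzQ, hzS⟩
  · simp [he]
  have hQ : dyadicCube n q ⊆ thickening r S := fun y hy ↦
    mem_thickening_iff.2 ⟨z, hzS, (hdist hy hzQ).trans_lt hn⟩
  have hdiam : ediam (f '' (dyadicCube n q ∩ S)) ≤ ENNReal.ofReal (L * (√2 / 2 ^ n)) := by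
    refine ediam_le_of_forall_dist_le ?_
    rintro _ ⟨x, ⟨hxQ, hxS⟩, rfl⟩ _ ⟨y, ⟨hyQ, hyS⟩, rfl⟩
    rw [Real.dist_eq]
    exact (hf y hyS x hxS ((hdist hxQ hyQ).trans hn.le)).trans
      (mul_le_mul_of_nonneg_left (hdist hxQ hyQ) L.2)
  calc ENNReal.ofReal (√2 / 2 ^ n) * volume (closure (f '' (dyadicCube n q ∩ S)))
      ≤ ENNReal.ofReal (√2 / 2 ^ n) * ENNReal.ofReal (L * (√2 / 2 ^ n)) := by
        gcongr
        exact (Real.volume_le_diam _).trans ((ediam_closure _).trans_le hdiam)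
    _ = 2 * L * volume (dyadicCube n q) := by
        rw [volume_dyadicCube, Fintype.card_fin, ← ENNReal.ofReal_mul (by positivity),
          ← ENNReal.ofReal_coe_nnreal, ← ENNReal.ofReal_ofNat, ← ENNReal.ofReal_mul (by norm_num),
          ← ENNReal.ofReal_mul (by positivity)]
        congr 1
        field_simp
        rw [Real.sq_sqrt zero_le_two]
        ring
    _ = 2 * L * volume (dyadicCube n q ∩ thickening r S) := by rw [inter_eq_left.2 hQ]

theorem lintegral_dyadicLevelSum_le {n : ℕ} (hn : √2 / 2 ^ n < r)
    (hf : ∀ x ∈ S, ∀ y ∈ S, dist y x ≤ r → |f y - f x| ≤ L * dist y x) :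
    ∫⁻ h, dyadicLevelSum f S n h ≤ 2 * L * volume (thickening r S) := by
  simp only [dyadicLevelSum]
  rw [lintegral_tsum fun _ ↦
    (measurable_const.indicator isClosed_closure.measurableSet).aemeasurable]
  simp only [lintegral_indicator_const isClosed_closure.measurableSet]
  calc ∑' q, ENNReal.ofReal (√2 / 2 ^ n) * volume (closure (f '' (dyadicCube n q ∩ S)))
      ≤ ∑' q, 2 * L * volume (dyadicCube n q ∩ thickening r S) :=
        ENNReal.tsum_le_tsum fun q ↦ ofReal_mul_volume_closure_image_le hn q hf
    _ = 2 * L * volume (thickening r S) := by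
        rw [ENNReal.tsum_mul_left, tsum_volume_dyadicCube_inter n isOpen_thickening.measurableSet]

theorem hasLevelSetBound_of_dist_le (hr : 0 < r)
    (hf : ∀ x ∈ S, ∀ y ∈ S, dist y x ≤ r → |f y - f x| ≤ L * dist y x) :
    HasLevelSetBound f S (2 * L * volume (thickening r S)) := by
  refine ⟨fun h ↦ liminf (fun n ↦ dyadicLevelSum f S n h) atTop,
    .liminf (measurable_dyadicLevelSum f S),
    hausdorffMeasure_inter_preimage_le_liminf_dyadicLevelSum,
    (lintegral_liminf_le (measurable_dyadicLevelSum f S)).trans ?_⟩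
  exact liminf_le_of_frequently_le' ((tendsto_sqrt_two_div_two_pow.eventually
    (gt_mem_nhds hr)).mono fun n hn ↦ lintegral_dyadicLevelSum_le hn hf).frequently

end Eilenberg

section LevelSets

open Metric Bornology

theorem DifferentiableAt.exists_hasGradientAt_ne_zero {F : Type*} [NormedAddCommGroup F]
    [InnerProductSpace ℝ F] [CompleteSpace F] {f : F → ℝ} {x : F} (hd : DifferentiableAt ℝ f x)
    (h0 : ¬HasFDerivAt f (0 : F →L[ℝ] ℝ) x) : ∃ g, HasGradientAt f g x ∧ g ≠ 0 :=
  ⟨gradient f x, hd.hasGradientAt, fun hg ↦ h0 <| by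
    simpa [hg] using hasGradientAt_iff_hasFDerivAt.1 hd.hasGradientAt⟩

variable {f : EuclideanSpace ℝ (Fin 2) → ℝ}

theorem LipschitzWith.hasLevelSetBound {K : ℝ≥0} (hf : LipschitzWith K f)
    (S : Set (EuclideanSpace ℝ (Fin 2))) {r : ℝ} (hr : 0 < r) :
    HasLevelSetBound f S (2 * K * volume (thickening r S)) :=
  hasLevelSetBound_of_dist_le hr fun x _ y _ _ ↦
    (Real.dist_eq _ _).symm.trans_le (hf.dist_le_mul y x)

theorem LipschitzWith.ae_hausdorffMeasure_inter_preimage_ne_top {K : ℝ≥0}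
    (hf : LipschitzWith K f) {A : Set (EuclideanSpace ℝ (Fin 2))} (hA : IsBounded A) :
    ∀ᵐ h, μH[1] (A ∩ f ⁻¹' {h}) ≠ ∞ :=
  (hf.hasLevelSetBound A one_pos).ae_ne_top
    (ENNReal.mul_ne_top (by finiteness) hA.thickening.measure_lt_top.ne)

theorem LipschitzWith.ae_hausdorffMeasure_inter_preimage_eq_zero_of_volume_eq_zero {K : ℝ≥0}
    (hf : LipschitzWith K f) {T : Set (EuclideanSpace ℝ (Fin 2))} (hT : volume T = 0) :
    ∀ᵐ h, μH[1] (T ∩ f ⁻¹' {h}) = 0 := by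
  have hU (j : ℕ) : ∃ U ⊇ T, IsOpen U ∧ volume U < 2⁻¹ ^ j :=
    exists_isOpen_lt_of_lt T _ (hT ▸ ENNReal.pow_pos (by norm_num) j)
  choose U hTU hUo hUv using hU
  refine HasLevelSetBound.ae_eq_zero (ε := fun j ↦ 2 * K * 2⁻¹ ^ j) ?_ fun j ↦ ?_
  · simpa using ENNReal.Tendsto.const_mul
      (ENNReal.tendsto_pow_atTop_nhds_zero_of_lt_one (by norm_num)) (.inr (by finiteness))
  refine .of_forall_dist_le (P := fun _ y ↦ y ∈ U j) (fun x hx ↦ (hUo j).mem_nhds (hTU j hx))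
    fun r hr ↦ (hf.hasLevelSetBound _ hr.1).mono subset_rfl ?_
  gcongr
  refine (measure_mono fun z hz ↦ ?_).trans (hUv j).le
  obtain ⟨x, hxS, hxz⟩ := mem_thickening_iff.1 hz
  exact hxS.2 z hxz.le

theorem ae_hausdorffMeasure_inter_preimage_eq_zero_of_hasFDerivAt_zero
    {T : Set (EuclideanSpace ℝ (Fin 2))} (hT : IsBounded T)
    (hf : ∀ x ∈ T, HasFDerivAt f (0 : EuclideanSpace ℝ (Fin 2) →L[ℝ] ℝ) x) :
    ∀ᵐ h, μH[1] (T ∩ f ⁻¹' {h}) = 0 := by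
  refine HasLevelSetBound.ae_eq_zero
    (ε := fun j ↦ 2 * ((2⁻¹ ^ j : ℝ≥0) : ℝ≥0∞) * volume (thickening 1 T)) ?_ fun j ↦ ?_
  · have : Tendsto (fun j : ℕ ↦ ((2⁻¹ ^ j : ℝ≥0) : ℝ≥0∞)) atTop (𝓝 0) :=
      ENNReal.tendsto_coe.2 (tendsto_pow_atTop_nhds_zero_of_lt_one zero_le (by norm_num))
    simpa using ENNReal.Tendsto.mul_const (ENNReal.Tendsto.const_mul this (.inr (by finiteness)))
      (.inr (hT.thickening.measure_lt_top (μ := volume)).ne)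
  refine .of_forall_dist_le (P := fun x y ↦ |f y - f x| ≤ (2⁻¹ ^ j : ℝ≥0) * dist y x)
    (fun x hx ↦ ?_) fun r hr ↦ ?_
  · filter_upwards [(hf x hx).isLittleO.def (c := ((2⁻¹ ^ j : ℝ≥0) : ℝ)) (by positivity)]
      with y hy
    simpa [dist_eq_norm] using hy
  · refine (hasLevelSetBound_of_dist_le hr.1 fun x hx y _ hxy ↦ hx.2 y hxy).mono subset_rfl ?_
    gcongr
    exact (thickening_mono hr.2 _).trans (thickening_subset_of_subset 1 (sep_subset _ _))

theorem LipschitzWith.ae_hausdorffMeasure_critical_inter_preimage_eq_zero {K : ℝ≥0}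
    (hf : LipschitzWith K f) {A : Set (EuclideanSpace ℝ (Fin 2))} (hA : IsBounded A) :
    ∀ᵐ h, μH[1] ({x ∈ A | ¬∃ g, HasGradientAt f g x ∧ g ≠ 0} ∩ f ⁻¹' {h}) = 0 := by
  filter_upwards [hf.ae_hausdorffMeasure_inter_preimage_eq_zero_of_volume_eq_zero
      (ae_iff.1 hf.ae_differentiableAt),
    ae_hausdorffMeasure_inter_preimage_eq_zero_of_hasFDerivAt_zero
      (hA.subset (sep_subset A fun x ↦ HasFDerivAt f 0 x)) fun _ hx ↦ hx.2] with h h₁ h₂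
  refine measure_mono_null (fun x ⟨⟨hxA, hx⟩, hxh⟩ ↦ ?_) (measure_union_null h₁ h₂)
  by_cases hd : DifferentiableAt ℝ f x
  · exact .inr ⟨⟨hxA, not_not.1 fun h0 ↦ hx (hd.exists_hasGradientAt_ne_zero h0)⟩, hxh⟩
  · exact .inl ⟨hd, hxh⟩

end LevelSets

section Curves

open Metric Module
open scoped RealInnerProductSpace

attribute [local instance] FiniteDimensional.of_fact_finrank_eq_two

variable {E : Type*} [NormedAddCommGroup E] [InnerProductSpace ℝ E] [Fact (finrank ℝ E = 2)]

theorem Orientation.inner_smul_add_inner_smul_rightAngleRotation (o : Orientation ℝ E (Fin 2))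
    {e : E} (he : ‖e‖ = 1) (x : E) :
    ⟪x, e⟫ • e + ⟪x, o.rightAngleRotation e⟫ • o.rightAngleRotation e = x := by
  refine ext_inner_right ℝ fun v ↦ ?_
  have := o.inner_mul_inner_add_areaForm_mul_areaForm e x v
  rw [he, one_pow, one_mul] at this
  rw [real_inner_comm x e] at this
  rw [inner_add_left, real_inner_smul_left, real_inner_smul_left,
    o.inner_rightAngleRotation_left, o.inner_rightAngleRotation_right, o.areaForm_swap x e]
  linear_combination this

theorem Orientation.inner_sq_add_inner_rightAngleRotation_sq (o : Orientation ℝ E (Fin 2))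
    {e : E} (he : ‖e‖ = 1) (x : E) :
    ⟪x, e⟫ ^ 2 + ⟪x, o.rightAngleRotation e⟫ ^ 2 = ‖x‖ ^ 2 := by
  have := o.inner_sq_add_areaForm_sq e x
  rw [he, one_pow, one_mul] at this
  rw [real_inner_comm x e] at this
  rwa [o.inner_rightAngleRotation_right, o.areaForm_swap x e, neg_neg]

theorem exists_lipschitzWith_range_of_abs_inner_le {e : E} (he : ‖e‖ = 1) {S : Set E}
    (hS : ∀ x ∈ S, ∀ y ∈ S, |⟪y - x, e⟫| ≤ ‖y - x‖ / 2) :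
    ∃ γ : ℝ → E, LipschitzWith 2 γ ∧ S ⊆ range γ := by
  let o : Orientation ℝ E (Fin 2) := (finBasisOfFinrankEq ℝ E Fact.out).orientation
  obtain ⟨v, hv, hexp, hsq⟩ : ∃ v : E, ‖v‖ = 1 ∧ (∀ x, ⟪x, e⟫ • e + ⟪x, v⟫ • v = x) ∧
      ∀ x, ⟪x, e⟫ ^ 2 + ⟪x, v⟫ ^ 2 = ‖x‖ ^ 2 :=
    ⟨o.rightAngleRotation e, by rw [LinearIsometryEquiv.norm_map, he],
      o.inner_smul_add_inner_smul_rightAngleRotation he,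
      o.inner_sq_add_inner_rightAngleRotation_sq he⟩
  have hcone : ∀ x ∈ S, ∀ y ∈ S, |⟪y, e⟫ - ⟪x, e⟫| ≤ |⟪y, v⟫ - ⟪x, v⟫| := fun x hx y hy ↦ by
    have h₁ := hS x hx y hy
    have h₂ := hsq (y - x)
    rw [← inner_sub_left, ← inner_sub_left, ← sq_le_sq]
    nlinarith [abs_nonneg ⟪y - x, e⟫, sq_abs ⟪y - x, e⟫]
  have hinj : InjOn (⟪·, v⟫) S := fun x hx y hy hxy ↦ by
    have hxy : ⟪x, v⟫ = ⟪y, v⟫ := hxy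
    have hxy' : ⟪y, e⟫ = ⟪x, e⟫ := by
      simpa [hxy, sub_eq_zero] using hcone x hx y hy
    rw [← hexp x, ← hexp y, hxy, hxy']
  have hlip : LipschitzOnWith 1 (fun t ↦ ⟪Function.invFunOn (⟪·, v⟫) S t, e⟫) ((⟪·, v⟫) '' S) := by
    refine .of_dist_le_mul ?_
    rintro _ ⟨x, hx, rfl⟩ _ ⟨y, hy, rfl⟩
    simp only [hinj.leftInvOn_invFunOn hx, hinj.leftInvOn_invFunOn hy, Real.dist_eq,
      NNReal.coe_one, one_mul]
    exact hcone y hy x hx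
  obtain ⟨φ, hφ, hφS⟩ := hlip.extend_real
  refine ⟨fun t ↦ φ t • e + t • v, .of_dist_le_mul fun s t ↦ ?_, fun x hx ↦ ⟨⟪x, v⟫, ?_⟩⟩
  · calc dist (φ s • e + s • v) (φ t • e + t • v) = ‖(φ s - φ t) • e + (s - t) • v‖ := by
          rw [dist_eq_norm]; congr 1; simp only [sub_smul]; abel
      _ ≤ dist (φ s) (φ t) + dist s t := by
          refine (norm_add_le _ _).trans_eq ?_
          rw [norm_smul, norm_smul, he, hv, mul_one, mul_one, Real.dist_eq, Real.dist_eq,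
            Real.norm_eq_abs, Real.norm_eq_abs]
      _ ≤ 2 * dist s t := by
          have := hφ.dist_le_mul s t
          rw [NNReal.coe_one, one_mul] at this
          linarith
  · show φ ⟪x, v⟫ • e + ⟪x, v⟫ • v = x
    rw [← hφS (mem_image_of_mem _ hx)]
    simp only [hinj.leftInvOn_invFunOn hx]
    exact hexp x

theorem exists_lipschitzWith_cover_of_eventually_abs_inner_le {S : Set E}
    (hS : ∀ x ∈ S, ∃ e : E, ‖e‖ = 1 ∧ ∀ᶠ y in 𝓝 x, y ∈ S → |⟪y - x, e⟫| ≤ ‖y - x‖ / 4) :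
    ∃ γ : ℕ → ℝ → E, (∀ i, LipschitzWith 2 (γ i)) ∧ S ⊆ ⋃ i, range (γ i) := by
  have : Nontrivial E := Module.nontrivial_of_finrank_eq_succ (Fact.out : finrank ℝ E = 2)
  have : Nonempty (sphere (0 : E) 1) := (NormedSpace.sphere_nonempty.2 zero_le_one).to_subtype
  obtain ⟨u, hu⟩ := TopologicalSpace.exists_dense_seq (sphere (0 : E) 1)
  obtain ⟨c, hc⟩ := TopologicalSpace.exists_dense_seq E
  let piece (i : ℕ × ℕ × ℕ) : Set E :=
    {x ∈ S ∩ ball (c i.2.2) (1 / (i.2.1 + 1) / 2) |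
      ∀ y ∈ S, dist y x < 1 / (i.2.1 + 1) → |⟪y - x, u i.1⟫| ≤ ‖y - x‖ / 2}
  have hpiece (i : ℕ × ℕ × ℕ) : ∀ x ∈ piece i, ∀ y ∈ piece i, |⟪y - x, u i.1⟫| ≤ ‖y - x‖ / 2 :=
    fun x hx y hy ↦ hx.2 y hy.1.1 <| (dist_triangle_right y x (c i.2.2)).trans_lt <| by
      linarith [mem_ball.1 hx.1.2, mem_ball.1 hy.1.2]
  have hcover : S ⊆ ⋃ i, piece i := by
    intro x hx
    obtain ⟨e, he, hev⟩ := hS x hx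
    obtain ⟨ε, hε, hball⟩ := Metric.eventually_nhds_iff.1 hev
    obtain ⟨k, hk⟩ := hu.exists_dist_lt (⟨e, by simpa using he⟩ : sphere (0 : E) 1)
      (by norm_num : (0 : ℝ) < 1 / 4)
    obtain ⟨m, hm⟩ := exists_nat_one_div_lt hε
    obtain ⟨j, hj⟩ := hc.exists_dist_lt x (by positivity : (0 : ℝ) < 1 / (m + 1) / 2)
    refine mem_iUnion.2 ⟨(k, m, j), ⟨hx, hj⟩, fun y hy hyx ↦ ?_⟩
    have hek : ‖(u k : E) - e‖ ≤ 1 / 4 := by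
      rw [← dist_eq_norm, dist_comm]; exact hk.le
    calc |⟪y - x, u k⟫| = |⟪y - x, e⟫ + ⟪y - x, (u k : E) - e⟫| := by
          rw [← inner_add_right, add_sub_cancel]
      _ ≤ ‖y - x‖ / 4 + ‖y - x‖ * (1 / 4) :=
          (abs_add_le _ _).trans (add_le_add (hball (hyx.trans hm) hy)
            ((abs_real_inner_le_norm _ _).trans (by gcongr)))
      _ = ‖y - x‖ / 2 := by ring
  choose γ hγ hSγ using fun i ↦ exists_lipschitzWith_range_of_abs_inner_le
    (norm_eq_of_mem_sphere (u i.1)) (hpiece i)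
  obtain ⟨σ, hσ⟩ := exists_surjective_nat (ℕ × ℕ × ℕ)
  refine ⟨fun n ↦ γ (σ n), fun n ↦ hγ (σ n), fun x hx ↦ ?_⟩
  obtain ⟨i, hi⟩ := mem_iUnion.1 (hcover hx)
  obtain ⟨n, rfl⟩ := hσ i
  exact mem_iUnion.2 ⟨n, hSγ _ hi⟩

theorem HasGradientAt.eventually_abs_inner_le {F : Type*} [NormedAddCommGroup F]
    [InnerProductSpace ℝ F] [CompleteSpace F] {f : F → ℝ} {g x : F} (hf : HasGradientAt f g x)
    (hg : g ≠ 0) : ∀ᶠ y in 𝓝 x, f y = f x → |⟪y - x, ‖g‖⁻¹ • g⟫| ≤ ‖y - x‖ / 4 := by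
  have hg' : 0 < ‖g‖ := norm_pos_iff.2 hg
  filter_upwards [(hasGradientAt_iff_isLittleO.1 hf).def (by positivity : 0 < ‖g‖ / 4)]
    with y hy hyx
  rw [hyx, sub_self, zero_sub, norm_neg, Real.norm_eq_abs] at hy
  rw [real_inner_smul_right, abs_mul, abs_inv, abs_norm, real_inner_comm]
  calc ‖g‖⁻¹ * |⟪g, y - x⟫| ≤ ‖g‖⁻¹ * (‖g‖ / 4 * ‖y - x‖) := by gcongr
    _ = ‖y - x‖ / 4 := by field_simp

theorem exists_lipschitzWith_cover_levelSet (f : E → ℝ) (h : ℝ) :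
    ∃ γ : ℕ → ℝ → E, (∀ i, LipschitzWith 2 (γ i)) ∧
      {x | f x = h ∧ ∃ g, HasGradientAt f g x ∧ g ≠ 0} ⊆ ⋃ i, range (γ i) :=
  exists_lipschitzWith_cover_of_eventually_abs_inner_le fun _ ⟨hx, g, hg, hg0⟩ ↦
    ⟨‖g‖⁻¹ • g, norm_smul_inv_norm hg0, (hg.eventually_abs_inner_le hg0).mono
      fun _ hy hyS ↦ hy (hyS.1.trans hx.symm)⟩

end Curves

/-- **Structure of level sets of Lipschitz functions, I (rectifiability).**
Let `Ω ⊆ ℝ²` be open and `H : Ω → ℝ` Lipschitz with bounded support.  Then for a.e.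
`h ∈ H(Ω)` the level set `E_h = H⁻¹(h)` has finite `H¹`-measure, is `1`-rectifiable,
and `H` is differentiable with nonvanishing gradient at `H¹`-a.e. point of `E_h`. -/
theorem level_sets_rectifiable
    (Ω : Set (EuclideanSpace ℝ (Fin 2))) (hΩ : IsOpen Ω)
    (H : EuclideanSpace ℝ (Fin 2) → ℝ) (K : ℝ≥0) (hlip : LipschitzOnWith K H Ω)
    (hsupp : Bornology.IsBounded {x ∈ Ω | H x ≠ 0}) :
    ∀ᵐ h ∂(volume : Measure ℝ), h ∈ H '' Ω →
      (μH[1] {x ∈ Ω | H x = h} ≠ ⊤) ∧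
      (∃ f : ℕ → ℝ → EuclideanSpace ℝ (Fin 2),
        (∀ i, ∃ Ki : ℝ≥0, LipschitzWith Ki (f i)) ∧
        μH[1] ({x ∈ Ω | H x = h} \ ⋃ i, Set.range (f i)) = 0) ∧
      (∀ᵐ x ∂((μH[1] : Measure (EuclideanSpace ℝ (Fin 2))).restrict {x ∈ Ω | H x = h}),
        ∃ g : EuclideanSpace ℝ (Fin 2), HasGradientAt H g x ∧ g ≠ 0) := by
  obtain ⟨F, hF, hHF⟩ := hlip.extend_real
  have : Fact (Module.finrank ℝ (EuclideanSpace ℝ (Fin 2)) = 2) := ⟨finrank_euclideanSpace_fin⟩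
  set A := {x ∈ Ω | H x ≠ 0}
  filter_upwards [hF.ae_hausdorffMeasure_inter_preimage_ne_top hsupp,
    hF.ae_hausdorffMeasure_critical_inter_preimage_eq_zero hsupp,
    compl_mem_ae_iff.2 (measure_singleton 0)] with h hfin hnull (hh : h ≠ 0) _
  have hlevel : {x ∈ Ω | H x = h} = Ω ∩ F ⁻¹' {h} :=
    ext fun x ↦ and_congr_right fun hx ↦ by rw [hHF hx, mem_preimage, mem_singleton_iff]
  have hA : Ω ∩ F ⁻¹' {h} ⊆ A ∩ F ⁻¹' {h} := fun x ⟨hxΩ, hx⟩ ↦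
    ⟨⟨hxΩ, by rwa [hHF hxΩ, hx]⟩, hx⟩
  set N := {x ∈ A | ¬∃ g, HasGradientAt F g x ∧ g ≠ 0} ∩ F ⁻¹' {h}
  have hreg {x} (hx : x ∈ Ω ∩ F ⁻¹' {h}) (hxN : x ∉ N) : ∃ g, HasGradientAt F g x ∧ g ≠ 0 :=
    not_not.1 fun hg ↦ hxN ⟨⟨(hA hx).1, hg⟩, hx.2⟩
  obtain ⟨γ, hγ, hcover⟩ := exists_lipschitzWith_cover_levelSet F h
  rw [hlevel]
  refine ⟨ne_top_of_le_ne_top hfin (measure_mono hA), ⟨γ, fun i ↦ ⟨2, hγ i⟩, ?_⟩, ?_⟩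
  · refine measure_mono_null (fun x ⟨hx, hxγ⟩ ↦ ?_) hnull
    by_contra hxN
    exact hxγ (hcover ⟨hx.2, hreg hx hxN⟩)
  · refine (ae_restrict_iff' (hΩ.measurableSet.inter (hF.continuous.measurable
      (measurableSet_singleton h)))).2 (measure_mono_null (fun x hx ↦ ?_) hnull)
    by_contra hxN
    refine hx fun hxΩ ↦ ?_
    obtain ⟨g, hg, hg0⟩ := hreg hxΩ hxN
    exact ⟨g, hg.congr_of_eventuallyEq (eventually_of_mem (hΩ.mem_nhds hxΩ.1) hHF), hg0⟩
end
end
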